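/- arXiv:1309.1258 — 3 statements merged into one kernel-verified Lean document; each statement's English description precedes it below -/
import Mathlib

section
/- Let C be a cartesian closed category, let R be an object of C, and let F, G be endofunctors of C. Suppose there is a natural isomorphism (in the object variable α, contravariantly) between the internal hom (G α ⟹ R) and F (α ⟹ R), i.e. an isomorphism of functors Cᵒᵖ ⥤ C between α ↦ (G.obj α ⟹ R) and α ↦ F.obj (α ⟹ R). If (A, a : G.obj A ⟶ A) is an initial G-algebra (an initial object of the category of G-algebras), then the object A ⟹ R, equipped with the coalgebra structure map (A ⟹ R) ⟶ (G.obj A ⟹ R) ≅ F.obj (A ⟹ R) given by internal precomposition with a followed by the natural isomorphism at A, is a terminal F-coalgebra (a terminal object of the category of F-coalgebras). -/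
/-!
In a symmetric monoidal closed category, `Hom(X, A ⟹ R) ≃ Hom(A, X ⟹ R)` naturally in `X` and
`A` (swap the tensor factors of the uncurried map), so `α ↦ (α ⟹ R)`, viewed as a functor
`Cᵒᵖ ⥤ C`, is right adjoint to its own `rightOp`. An initial `G`-algebra is a terminal
`G.op`-coalgebra in `Cᵒᵖ`, and a right adjoint `U` with `T ⋙ U ≅ U ⋙ F` sends terminal
`T`-coalgebras to terminal `F`-coalgebras: transposing along the adjunction and taking the mate of
the isomorphism turns coalgebra maps `V ⟶ U W` into coalgebra maps `L V ⟶ W`, bijectively.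
-/

open CategoryTheory CategoryTheory.Limits Opposite

namespace CategoryTheory

open MonoidalCategory

namespace MonoidalClosed

variable {C : Type*} [Category C] [MonoidalCategory C] [MonoidalClosed C]

section Braided

variable [BraidedCategory C]

noncomputable def transpose {X A R : C} (f : X ⟶ (ihom A).obj R) : A ⟶ (ihom X).obj R :=
  curry ((β_ X A).hom ≫ uncurry f)

lemma transpose_comp {X X' A R : C} (w : X' ⟶ X) (f : X ⟶ (ihom A).obj R) :
    transpose (w ≫ f) = transpose f ≫ (pre w).app R := by
  rw [transpose, transpose, curry_pre_app, uncurry_natural_left,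
    BraidedCategory.braiding_naturality_left_assoc]

end Braided

variable [SymmetricCategory C]

@[simp]
lemma transpose_transpose {X A R : C} (f : X ⟶ (ihom A).obj R) : transpose (transpose f) = f := by
  rw [transpose, transpose, uncurry_curry, SymmetricCategory.symmetry_assoc, curry_uncurry]

noncomputable def internalHomFlipAdjunction (R : C) :
    (internalHom.flip.obj R).rightOp ⊣ internalHom.flip.obj R :=
  Adjunction.mkOfHomEquiv
    { homEquiv _ _ := (opEquiv _ _).trans
        { toFun := transpose
          invFun := transpose
          left_inv := transpose_transpose
          right_inv := transpose_transpose }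
      homEquiv_naturality_left_symm f g := Quiver.Hom.unop_inj (transpose_comp f g)
      homEquiv_naturality_right f g := transpose_comp g.unop f.unop }

end MonoidalClosed

namespace Endofunctor

variable {C D : Type*} [Category C] [Category D]

def Algebra.toCoalgebraOp {G : C ⥤ C} (A : Algebra G) : Coalgebra G.op := ⟨op A.a, A.str.op⟩

def Algebra.isTerminalToCoalgebraOp {G : C ⥤ C} {A : Algebra G} (hA : IsInitial A) :
    IsTerminal A.toCoalgebraOp :=
  let unopAlgebra (V : Coalgebra G.op) : Algebra G := ⟨V.V.unop, V.str.unop⟩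
  let e (V : Coalgebra G.op) : (V ⟶ A.toCoalgebraOp) ≃ (A ⟶ unopAlgebra V) :=
    { toFun g := ⟨g.f.unop, Quiver.Hom.op_inj g.h⟩
      invFun g := ⟨g.f.op, Quiver.Hom.unop_inj g.h⟩
      left_inv _ := rfl
      right_inv _ := rfl }
  IsTerminal.ofUniqueHom (fun V => (e V).symm (hA.to _)) (fun V _ => (e V).injective (hA.hom_ext _ _))

variable {L : C ⥤ D} {U : D ⥤ C} {F : C ⥤ C} {T : D ⥤ D}

abbrev Coalgebra.map (U : D ⥤ C) (η : T ⋙ U ⟶ U ⋙ F) (W : Coalgebra T) : Coalgebra F :=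
  ⟨U.obj W.V, U.map W.str ≫ η.app W.V⟩

-- The structure map is the component at `V` of the mate `F ⋙ L ⟶ L ⋙ T` of `η`.
abbrev Coalgebra.mapLeft (adj : L ⊣ U) (η : U ⋙ F ⟶ T ⋙ U) (V : Coalgebra F) : Coalgebra T :=
  ⟨L.obj V.V, (adj.homEquiv _ _).symm (V.str ≫ F.map (adj.unit.app V.V) ≫ η.app _)⟩

lemma Coalgebra.homEquiv_mapLeft_str_comp (adj : L ⊣ U) (η : U ⋙ F ⟶ T ⋙ U) (V : Coalgebra F)
    {Z : D} (f : L.obj V.V ⟶ Z) :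
    adj.homEquiv _ _ ((V.mapLeft adj η).str ≫ T.map f) =
      V.str ≫ F.map (adj.homEquiv _ _ f) ≫ η.app Z := by
  rw [adj.homEquiv_naturality_right, Equiv.apply_symm_apply, adj.homEquiv_unit, F.map_comp, ← Functor.comp_map U F]
  simp only [Category.assoc]
  rw [η.naturality f]
  rfl

lemma Coalgebra.mapLeft_str_comp_eq_iff (adj : L ⊣ U) (η : T ⋙ U ≅ U ⋙ F) (V : Coalgebra F)
    (W : Coalgebra T) (f : L.obj V.V ⟶ W.V) :
    (V.mapLeft adj η.inv).str ≫ T.map f = f ≫ W.str ↔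
      V.str ≫ F.map (adj.homEquiv _ _ f) = adj.homEquiv _ _ f ≫ (W.map U η.hom).str := by
  rw [← (adj.homEquiv _ _).apply_eq_iff_eq, homEquiv_mapLeft_str_comp,
    adj.homEquiv_naturality_right, ← Iso.app_inv, ← Category.assoc, Iso.comp_inv_eq,
    Category.assoc]
  rfl

def Coalgebra.homEquivMapLeft (adj : L ⊣ U) (η : T ⋙ U ≅ U ⋙ F) (V : Coalgebra F)
    (W : Coalgebra T) : (V.mapLeft adj η.inv ⟶ W) ≃ (V ⟶ W.map U η.hom) where
  toFun f := ⟨adj.homEquiv _ _ f.f, (mapLeft_str_comp_eq_iff adj η V W f.f).1 f.h⟩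
  invFun g := ⟨(adj.homEquiv _ _).symm g.f,
    (mapLeft_str_comp_eq_iff adj η V W _).2 (by simpa only [Equiv.apply_symm_apply] using g.h)⟩
  left_inv f := Hom.ext ((adj.homEquiv _ _).symm_apply_apply f.f)
  right_inv g := Hom.ext ((adj.homEquiv _ _).apply_symm_apply g.f)

def Coalgebra.isTerminalMap (adj : L ⊣ U) (η : T ⋙ U ≅ U ⋙ F) {W : Coalgebra T}
    (hW : IsTerminal W) : IsTerminal (W.map U η.hom) :=
  IsTerminal.ofUniqueHom (fun V => homEquivMapLeft adj η V W (hW.from _))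
    (fun V _ => (homEquivMapLeft adj η V W).symm.injective (hW.hom_ext _ _))

end Endofunctor

end CategoryTheory

/-- If `(G α ⟹ R)` is naturally isomorphic to `F (α ⟹ R)` (contravariantly in `α`),
then the internal hom `A ⟹ R` out of the carrier of an initial `G`-algebra `(A, a)`,
with structure map given by internal precomposition with `a` followed by the natural
isomorphism, is a terminal `F`-coalgebra. -/
theorem initial_algebra_internalHom_terminal_coalgebra
    {C : Type*} [Category C] [CartesianMonoidalCategory C] [MonoidalClosed C]
    (R : C) (F G : C ⥤ C)
    (η : G.op ⋙ CategoryTheory.MonoidalClosed.internalHom.flip.obj R ≅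
         CategoryTheory.MonoidalClosed.internalHom.flip.obj R ⋙ F)
    (A : C) (a : G.obj A ⟶ A)
    (hA : Nonempty (IsInitial (Endofunctor.Algebra.mk A a : Endofunctor.Algebra G))) :
    Nonempty (IsTerminal
      (Endofunctor.Coalgebra.mk ((CategoryTheory.MonoidalClosed.internalHom.flip.obj R).obj (op A))
        ((CategoryTheory.MonoidalClosed.internalHom.flip.obj R).map a.op ≫ η.hom.app (op A)) :
        Endofunctor.Coalgebra F)) := by
  obtain ⟨hI⟩ := hA
  let _ : BraidedCategory C := .ofCartesianMonoidalCategory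
  exact ⟨Endofunctor.Coalgebra.isTerminalMap (MonoidalClosed.internalHomFlipAdjunction R) η
    (Endofunctor.Algebra.isTerminalToCoalgebraOp hI)⟩
end

section
/- Let R be a type, and let F, G be endofunctors of the category of types (Type u). Suppose given, for every type X, an equivalence e X : (G.obj X → R) ≃ F.obj (X → R) that is natural in X contravariantly, meaning: for all types X, Y, every function f : X → Y, and every h : G.obj Y → R, one has e X (h ∘ G.map f) = F.map (fun k => k ∘ f) (e Y h). If (A, a : G.obj A → A) is an initial G-algebra, then the type A → R, equipped with the coalgebra structure map sending h : A → R to e A (h ∘ a) : F.obj (A → R), is a terminal F-coalgebra. -/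
open CategoryTheory CategoryTheory.Limits

universe u

/-!
Transposing along `e`, a map `V → (A → R)` out of an `F`-coalgebra `V` is the same as a map
`A → (V → R)` into a `G`-algebra structure on `V → R`, and naturality of `e` makes the
coalgebra-morphism condition on the first equivalent to the algebra-morphism condition on the
second. Initiality of `A` thus yields exactly one coalgebra morphism `V ⟶ (A → R)` for each `V`.
-/

namespace CategoryTheory.Endofunctor

variable {R : Type u} {F G : Type u ⥤ Type u}
  (e : ∀ X : Type u, (G.obj X → R) ≃ F.obj (X → R))

def IsNaturalArrowEquiv : Prop :=
  ∀ (X Y : Type u) (f : X → Y) (h : G.obj Y → R),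
    e X (h ∘ G.map (TypeCat.ofHom f)) = F.map (TypeCat.ofHom (fun k : Y → R => k ∘ f)) (e Y h)

def Algebra.arrowCoalgebra (A : Algebra G) : Coalgebra F where
  V := A.a → R
  str := TypeCat.ofHom fun h => e A.a (h ∘ A.str)

def Coalgebra.transposeStr (V : Coalgebra F) (x : V.V) : G.obj (V.V → R) → R :=
  (e (V.V → R)).symm (F.map (TypeCat.ofHom fun y (k : V.V → R) => k y) (V.str x))

def Coalgebra.arrowAlgebra (V : Coalgebra F) : Algebra G where
  a := V.V → R
  str := TypeCat.ofHom fun t x => V.transposeStr e x t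

variable {e}

theorem Coalgebra.apply_transposeStr_comp (nat : IsNaturalArrowEquiv e) (V : Coalgebra F)
    {X : Type u} (g : X → V.V → R) (x : V.V) :
    e X (V.transposeStr e x ∘ G.map (TypeCat.ofHom g)) =
      F.map (TypeCat.ofHom (Function.swap g)) (V.str x) := by
  rw [nat, Coalgebra.transposeStr, Equiv.apply_symm_apply, ← Functor.map_comp_apply]
  rfl

theorem Coalgebra.isHom_arrowCoalgebra_iff (nat : IsNaturalArrowEquiv e) (V : Coalgebra F)
    (A : Algebra G) (f : V.V → A.a → R) :
    V.str ≫ F.map (TypeCat.ofHom f) = TypeCat.ofHom f ≫ (A.arrowCoalgebra e).str ↔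
      G.map (TypeCat.ofHom (Function.swap f)) ≫ (V.arrowAlgebra e).str =
        A.str ≫ TypeCat.ofHom (Function.swap f) := by
  have pointwise (x : V.V) :
      F.map (TypeCat.ofHom f) (V.str x) = e A.a (f x ∘ A.str) ↔
        V.transposeStr e x ∘ G.map (TypeCat.ofHom (Function.swap f)) = f x ∘ A.str := by
    rw [← (e A.a).apply_eq_iff_eq, V.apply_transposeStr_comp nat]
  constructor
  · intro h
    ext t
    funext x
    exact congrFun ((pointwise x).1 (ConcreteCategory.congr_hom h x)) t
  · intro h
    ext x
    exact (pointwise x).2 (funext fun t => congrFun (ConcreteCategory.congr_hom h t) x)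

def Coalgebra.homArrowCoalgebraEquiv (nat : IsNaturalArrowEquiv e) (V : Coalgebra F)
    (A : Algebra G) :
    (V ⟶ A.arrowCoalgebra e) ≃ (A ⟶ V.arrowAlgebra e) where
  toFun m := ⟨TypeCat.ofHom (Function.swap m.f), (V.isHom_arrowCoalgebra_iff nat A m.f).1 m.h⟩
  invFun g := ⟨TypeCat.ofHom (Function.swap g.f),
    (V.isHom_arrowCoalgebra_iff nat A (Function.swap g.f)).2 g.h⟩
  left_inv _ := rfl
  right_inv _ := rfl

end CategoryTheory.Endofunctor

/-- Type-level version: if `(G X → R) ≃ F (X → R)` naturally (contravariantly) in `X`,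
then `A → R` for an initial `G`-algebra `(A, a)`, with structure map `h ↦ e A (h ∘ a)`,
is a terminal `F`-coalgebra. -/
theorem initial_algebra_arrow_terminal_coalgebra_type
    (R : Type u) (F G : Type u ⥤ Type u)
    (e : ∀ X : Type u, (G.obj X → R) ≃ F.obj (X → R))
    (nat : ∀ (X Y : Type u) (f : X → Y) (h : G.obj Y → R),
      e X (h ∘ G.map (TypeCat.ofHom f)) = F.map (TypeCat.ofHom (fun k : Y → R => k ∘ f)) (e Y h))
    (A : Type u) (a : G.obj A → A)
    (hA : Nonempty (IsInitial (Endofunctor.Algebra.mk A (TypeCat.ofHom a) : Endofunctor.Algebra G))) :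
    Nonempty (IsTerminal
      (Endofunctor.Coalgebra.mk (A → R) (TypeCat.ofHom (fun h => e A (h ∘ a))) :
        Endofunctor.Coalgebra F)) := by
  obtain ⟨init⟩ := hA
  let homEquiv V := Endofunctor.Coalgebra.homArrowCoalgebraEquiv nat V ⟨A, TypeCat.ofHom a⟩
  exact ⟨IsTerminal.ofUniqueHom (fun V => (homEquiv V).symm (init.to _))
    (fun V _ => (homEquiv V).eq_symm_apply.2 (init.hom_ext _ _))⟩
end

section
/- Let B and R be types and let F be the endofunctor of the category of types given on objects by F.obj Y = R × (B → Y) and on morphisms by F.map f = Prod.map id (fun k => f ∘ k). Then the type List B → R, equipped with the coalgebra structure map sending h : List B → R to (h [], fun (b : B) => fun (l : List B) => h (b :: l)) : R × (B → (List B → R)), is a terminal F-coalgebra. -/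
/-! A coalgebra `s : X → R × (B → X)` is a deterministic automaton over the alphabet `B` with
outputs in `R`. The morphism into `List B → R` sends a state to its behaviour, the output after
reading a word; a coalgebra morphism must satisfy exactly the recursion defining the behaviour,
so it is unique by induction on the word. -/

open CategoryTheory CategoryTheory.Limits

universe u

/-- The endofunctor `Y ↦ R × (B → Y)` of the category of types. -/
def listDualFunctor (B R : Type u) : Type u ⥤ Type u where
  obj Y := R × (B → Y)
  map f := TypeCat.ofHom (Prod.map id (fun k => f ∘ k))

section ListArrowCorec

variable {B R X : Type*}

def listArrowCorec (s : X → R × (B → X)) (x : X) : List B → R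
  | [] => (s x).1
  | b :: l => listArrowCorec s ((s x).2 b) l

theorem eq_listArrowCorec (s : X → R × (B → X)) {f : X → List B → R}
    (nil : ∀ x, f x [] = (s x).1) (cons : ∀ x b l, f x (b :: l) = f ((s x).2 b) l) :
    f = listArrowCorec s := by
  funext x l
  induction l generalizing x with
  | nil => exact nil x
  | cons b l ih => rw [cons, ih, listArrowCorec]

theorem listArrow_coalgebra_square_iff (s : X → R × (B → X)) (f : X → List B → R) :
    (fun x => (f x [], fun b l => f x (b :: l))) = (fun x => Prod.map id (fun k => f ∘ k) (s x))
      ↔ (∀ x, f x [] = (s x).1) ∧ ∀ x b l, f x (b :: l) = f ((s x).2 b) l := by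
  simp only [funext_iff, Prod.ext_iff, Prod.map_fst, Prod.map_snd, id, Function.comp_apply]
  exact ⟨fun h => ⟨fun x => (h x).1, fun x b l => (h x).2 b l⟩,
    fun h x => ⟨h.1 x, fun b l => h.2 x b l⟩⟩

theorem listArrowCorec_square (s : X → R × (B → X)) :
    (fun x => (listArrowCorec s x [], fun b l => listArrowCorec s x (b :: l)))
      = (fun x => Prod.map id (fun k => listArrowCorec s ∘ k) (s x)) :=
  (listArrow_coalgebra_square_iff s _).2 ⟨fun _ => rfl, fun _ _ _ => rfl⟩

end ListArrowCorec

/-- The type `List B → R`, with structure map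
`h ↦ (h [], fun b l => h (b :: l))`, is a terminal coalgebra for the functor
`Y ↦ R × (B → Y)`. -/
theorem isTerminal_list_arrow_coalgebra (B R : Type u) :
    Nonempty (IsTerminal
      (Endofunctor.Coalgebra.mk (List B → R)
        (TypeCat.ofHom fun h => (h [], fun (b : B) => fun (l : List B) => h (b :: l))) :
        Endofunctor.Coalgebra (listDualFunctor B R))) := by
  refine ⟨IsTerminal.ofUniqueHom
    (fun V => ⟨TypeCat.ofHom (listArrowCorec V.str), ?_⟩) fun V m => ?_⟩
  · exact ConcreteCategory.hom_ext _ _ (congrFun (listArrowCorec_square V.str))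
  · obtain ⟨nil, cons⟩ := (listArrow_coalgebra_square_iff V.str m.f).1
      (funext fun v => (ConcreteCategory.congr_hom m.h v).symm)
    exact Endofunctor.Coalgebra.Hom.ext (ConcreteCategory.hom_ext _ _
      (congrFun (eq_listArrowCorec V.str nil cons)))
end
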